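/- Let φ be a Leibniz 2-cocycle on the twisted Schrödinger-Virasoro algebra with φ(L_0, Y_n) = 0 for all n ∈ ℤ and φ(L_m, M_n) = 0 whenever m + n ≠ 0. Then n·φ(Y_n, Y_m) = m·φ(Y_m, Y_n) for all m, n ∈ ℤ; in particular n·φ(Y_n, Y_0) = 0 and n·(φ(Y_n, Y_{−n}) + φ(Y_{−n}, Y_n)) = 0 for all n. -/
import Mathlib


abbrev B : Type := ℤ ⊕ ℤ ⊕ ℤ
abbrev V : Type := B →₀ ℂ

noncomputable def Lg (n : ℤ) : V := Finsupp.single (Sum.inl n) 1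
noncomputable def Yg (n : ℤ) : V := Finsupp.single (Sum.inr (Sum.inl n)) 1
noncomputable def Mg (n : ℤ) : V := Finsupp.single (Sum.inr (Sum.inr n)) 1

/-- Bracket on basis elements of the twisted Schrödinger–Virasoro algebra. -/
noncomputable def brB : B → B → V
  | Sum.inl n, Sum.inl m => ((m : ℂ) - n) • Lg (n + m)
  | Sum.inl n, Sum.inr (Sum.inl m) => ((m : ℂ) - n / 2) • Yg (n + m)
  | Sum.inl n, Sum.inr (Sum.inr p) => (p : ℂ) • Mg (n + p)
  | Sum.inr (Sum.inl m), Sum.inl n => -(((m : ℂ) - n / 2) • Yg (n + m))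
  | Sum.inr (Sum.inr p), Sum.inl n => -((p : ℂ) • Mg (n + p))
  | Sum.inr (Sum.inl m), Sum.inr (Sum.inl m') => ((m' : ℂ) - m) • Mg (m + m')
  | _, _ => 0

/-- The bilinear extension of the bracket to the whole space. -/
noncomputable def bk : V →ₗ[ℂ] V →ₗ[ℂ] V :=
  Finsupp.lsum ℂ fun a => LinearMap.toSpanSingleton ℂ (V →ₗ[ℂ] V)
    (Finsupp.lsum ℂ fun b => LinearMap.toSpanSingleton ℂ V (brB a b))

/-- `φ` is a Leibniz 2-cocycle on the twisted Schrödinger–Virasoro algebra. -/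
def IsLeibnizCocycle (φ : V →ₗ[ℂ] V →ₗ[ℂ] ℂ) : Prop :=
  ∀ x y z : V, φ x (bk y z) = φ (bk x y) z - φ (bk x z) y

lemma bk_single (a b : B) : bk (Finsupp.single a 1) (Finsupp.single b 1) = brB a b := by
  simp [bk, LinearMap.toSpanSingleton_apply]

lemma bk_LY (n m : ℤ) : bk (Lg n) (Yg m) = ((m : ℂ) - n / 2) • Yg (n + m) :=
  bk_single _ _

lemma bk_YY (n m : ℤ) : bk (Yg n) (Yg m) = ((m : ℂ) - n) • Mg (n + m) :=
  bk_single _ _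

lemma bk_LL (n m : ℤ) : bk (Lg n) (Lg m) = ((m : ℂ) - n) • Lg (n + m) :=
  bk_single _ _

lemma bk_LM (n p : ℤ) : bk (Lg n) (Mg p) = (p : ℂ) • Mg (n + p) :=
  bk_single _ _

theorem stmt12 (φ : V →ₗ[ℂ] V →ₗ[ℂ] ℂ) (hco : IsLeibnizCocycle φ)
    (hY : ∀ n : ℤ, φ (Lg 0) (Yg n) = 0)
    (hLM : ∀ m n : ℤ, m + n ≠ 0 → φ (Lg m) (Mg n) = 0) :
    (∀ m n : ℤ, (n : ℂ) * φ (Yg n) (Yg m) = (m : ℂ) * φ (Yg m) (Yg n)) ∧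
    (∀ n : ℤ, (n : ℂ) * φ (Yg n) (Yg 0) = 0) ∧
    (∀ n : ℤ, (n : ℂ) * (φ (Yg n) (Yg (-n)) + φ (Yg (-n)) (Yg n)) = 0) := by
  have hLM0 : φ (Lg 0) (Mg 0) = 0 := by
    have h := hco (Lg 1) (Lg (-1)) (Mg 0)
    rw [bk_LM, bk_LL, bk_LM] at h
    simp only [map_smul, LinearMap.smul_apply, smul_eq_mul] at h
    norm_num at h
    exact h
  have hM : ∀ k : ℤ, φ (Lg 0) (Mg k) = 0 := by
    intro k
    rcases eq_or_ne k 0 with rfl | hk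
    · exact hLM0
    · exact hLM 0 k (by omega)
  have key : ∀ m n : ℤ, (n : ℂ) * φ (Yg n) (Yg m) = (m : ℂ) * φ (Yg m) (Yg n) := by
    intro m n
    have h := hco (Lg 0) (Yg n) (Yg m)
    rw [bk_YY, bk_LY, bk_LY] at h
    simp only [map_smul, LinearMap.smul_apply, smul_eq_mul, zero_add, hM] at h
    push_cast at h
    linear_combination -h
  refine ⟨key, fun n => by simpa using key 0 n, fun n => ?_⟩
  have h := key (-n) n
  push_cast at h
  linear_combination h
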